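/- Let S be a subset of the vertex set V of the grid graph P_m□P_n (whose vertices are pairs (i,j) with 1 ≤ i ≤ m, 1 ≤ j ≤ n, two vertices adjacent when they differ by 1 in exactly one coordinate). Then the geodetic convex hull [S] equals V if and only if S contains a vertex with i = 1, a vertex with i = m, a vertex with j = 1, and a vertex with j = n (i.e., S meets each of the four boundary sides of the grid). -/

import Mathlib

/-- A vertex set `K` is geodetically convex if it contains every vertex on a
geodesic (shortest path) between two of its vertices; in a connected graph,
`w` lies on a geodesic from `u` to `v` iff `dist u w + dist w v = dist u v`. -/
def geoConvex {V : Type} (G : SimpleGraph V) (K : Set V) : Prop :=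
  ∀ u ∈ K, ∀ v ∈ K, ∀ w, G.dist u w + G.dist w v = G.dist u v → w ∈ K

/-- The geodetic convex hull: the intersection of all convex sets containing `S`. -/
def geoHull {V : Type} (G : SimpleGraph V) (S : Set V) : Set V :=
  ⋂₀ {K | geoConvex G K ∧ S ⊆ K}

/-- The grid graph `P_m □ P_n`, the box product of two path graphs. -/
def gridGraph (m n : ℕ) : SimpleGraph (Fin m × Fin n) :=
  (SimpleGraph.pathGraph m).boxProd (SimpleGraph.pathGraph n)

open SimpleGraph

lemma pathWalk {m : ℕ} : ∀ (k : ℕ) (a c : Fin m), Nat.dist a.val c.val = k →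
    ∃ p : (pathGraph m).Walk a c, p.length = k := by
  intro k
  induction k with
  | zero =>
    intro a c h
    have : a = c := by
      apply Fin.ext
      simp only [Nat.dist] at h; omega
    subst this
    exact ⟨.nil, rfl⟩
  | succ k ih =>
    intro a c h
    rcases lt_or_ge a.val c.val with hlt | hle
    · have hb : a.val + 1 < m := by omega
      let a' : Fin m := ⟨a.val + 1, hb⟩
      have hadj : (pathGraph m).Adj a a' := pathGraph_adj.mpr (Or.inl rfl)
      have hd : Nat.dist a'.val c.val = k := by
        simp only [Nat.dist, a'] at h ⊢; omega
      obtain ⟨p, hp⟩ := ih a' c hd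
      exact ⟨.cons hadj p, by simp [hp]⟩
    · have hne : a.val ≠ c.val := by simp only [Nat.dist] at h; omega
      have hpos : 0 < a.val := by omega
      let a' : Fin m := ⟨a.val - 1, by omega⟩
      have hadj : (pathGraph m).Adj a a' := pathGraph_adj.mpr (Or.inr (by simp [a']; omega))
      have hd : Nat.dist a'.val c.val = k := by
        simp only [Nat.dist, a'] at h ⊢; omega
      obtain ⟨p, hp⟩ := ih a' c hd
      exact ⟨.cons hadj p, by simp [hp]⟩

lemma grid_walk_ge {m n : ℕ} {u v : Fin m × Fin n} (p : (gridGraph m n).Walk u v) :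
    Nat.dist u.1.val v.1.val + Nat.dist u.2.val v.2.val ≤ p.length := by
  induction p with
  | nil => simp [Nat.dist]
  | @cons a b c h p ih =>
    rcases (boxProd_adj.mp h) with ⟨h1, h2⟩ | ⟨h1, h2⟩
    · have := pathGraph_adj.mp h1
      have h2' : a.2.val = b.2.val := by rw [h2]
      simp only [Nat.dist, Walk.length_cons] at ih ⊢
      omega
    · have := pathGraph_adj.mp h1
      have h2' : a.1.val = b.1.val := by rw [h2]
      simp only [Nat.dist, Walk.length_cons] at ih ⊢
      omega

lemma grid_dist {m n : ℕ} (u v : Fin m × Fin n) :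
    (gridGraph m n).dist u v = Nat.dist u.1.val v.1.val + Nat.dist u.2.val v.2.val := by
  obtain ⟨a, b⟩ := u
  obtain ⟨c, d⟩ := v
  obtain ⟨p1, hp1⟩ := pathWalk (Nat.dist a.val c.val) a c rfl
  obtain ⟨p2, hp2⟩ := pathWalk (Nat.dist b.val d.val) b d rfl
  let w : (gridGraph m n).Walk (a, b) (c, d) :=
    (p1.boxProdLeft (SimpleGraph.pathGraph n) b).append
      (p2.boxProdRight (SimpleGraph.pathGraph m) c)
  have hwl : w.length = Nat.dist a.val c.val + Nat.dist b.val d.val := by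
    show ((p1.boxProdLeft (pathGraph n) b).append (p2.boxProdRight (pathGraph m) c)).length = _
    rw [Walk.length_append]
    unfold Walk.boxProdLeft Walk.boxProdRight
    erw [Walk.length_map, Walk.length_map, hp1, hp2]
  have hle : (gridGraph m n).dist (a, b) (c, d) ≤
      Nat.dist a.val c.val + Nat.dist b.val d.val := hwl ▸ dist_le w
  have hreach : (gridGraph m n).Reachable (a, b) (c, d) := ⟨w⟩
  obtain ⟨q, hq⟩ := hreach.exists_walk_length_eq_dist
  have hge := grid_walk_ge q
  rw [hq] at hge
  exact le_antisymm hle hge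

lemma grid_between_iff {m n : ℕ} (u w v : Fin m × Fin n) :
    (gridGraph m n).dist u w + (gridGraph m n).dist w v = (gridGraph m n).dist u v ↔
      (Nat.dist u.1.val w.1.val + Nat.dist w.1.val v.1.val = Nat.dist u.1.val v.1.val ∧
       Nat.dist u.2.val w.2.val + Nat.dist w.2.val v.2.val = Nat.dist u.2.val v.2.val) := by
  rw [grid_dist, grid_dist, grid_dist]
  have t1 := Nat.dist.triangle_inequality u.1.val w.1.val v.1.val
  have t2 := Nat.dist.triangle_inequality u.2.val w.2.val v.2.val
  omega

/-- The geodetic convex hull of `S` in the grid graph `P_m □ P_n` is the whole vertex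
set iff `S` meets each of the four boundary sides of the grid. -/
theorem grid_hull_univ_iff (m n : ℕ) (hm : 2 ≤ m) (hn : 2 ≤ n)
    (S : Set (Fin m × Fin n)) :
    geoHull (gridGraph m n) S = Set.univ ↔
      ((∃ v ∈ S, v.1.val = 0) ∧ (∃ v ∈ S, v.1.val = m - 1) ∧
       (∃ v ∈ S, v.2.val = 0) ∧ (∃ v ∈ S, v.2.val = n - 1)) := by
  constructor
  · intro h
    have key : ∀ K : Set (Fin m × Fin n), geoConvex (gridGraph m n) K → S ⊆ K →
        ∀ x, x ∈ K := by
      intro K hc hs x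
      have : x ∈ geoHull (gridGraph m n) S := by rw [h]; trivial
      exact this K ⟨hc, hs⟩
    refine ⟨?_, ?_, ?_, ?_⟩
    · by_contra hne
      push_neg at hne
      have := key {w | w.1.val ≠ 0} ?conv (fun v hv => hne v hv) (⟨0, by omega⟩, ⟨0, by omega⟩)
      · exact this rfl
      case conv =>
        intro p hp q hq w hw
        rw [grid_between_iff] at hw
        simp only [Set.mem_setOf_eq, Nat.dist] at hp hq hw ⊢
        omega
    · by_contra hne
      push_neg at hne
      have := key {w | w.1.val ≠ m - 1} ?conv (fun v hv => hne v hv)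
        (⟨m - 1, by omega⟩, ⟨0, by omega⟩)
      · exact this rfl
      case conv =>
        intro p hp q hq w hw
        rw [grid_between_iff] at hw
        have h1 := p.1.isLt; have h2 := q.1.isLt; have h3 := w.1.isLt
        simp only [Set.mem_setOf_eq, Nat.dist] at hp hq hw ⊢
        omega
    · by_contra hne
      push_neg at hne
      have := key {w | w.2.val ≠ 0} ?conv (fun v hv => hne v hv) (⟨0, by omega⟩, ⟨0, by omega⟩)
      · exact this rfl
      case conv =>
        intro p hp q hq w hw
        rw [grid_between_iff] at hw
        simp only [Set.mem_setOf_eq, Nat.dist] at hp hq hw ⊢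
        omega
    · by_contra hne
      push_neg at hne
      have := key {w | w.2.val ≠ n - 1} ?conv (fun v hv => hne v hv)
        (⟨0, by omega⟩, ⟨n - 1, by omega⟩)
      · exact this rfl
      case conv =>
        intro p hp q hq w hw
        rw [grid_between_iff] at hw
        have h1 := p.2.isLt; have h2 := q.2.isLt; have h3 := w.2.isLt
        simp only [Set.mem_setOf_eq, Nat.dist] at hp hq hw ⊢
        omega
  · rintro ⟨⟨vL, hvL, hL⟩, ⟨vR, hvR, hR⟩, ⟨vB, hvB, hB⟩, ⟨vT, hvT, hT⟩⟩
    apply Set.eq_univ_iff_forall.mpr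
    intro w K hK
    obtain ⟨hc, hs⟩ := hK
    have hw1 := w.1.isLt
    have hw2 := w.2.isLt
    -- p = (w.1, vL.2) is between vL and vR
    have hp : (w.1, vL.2) ∈ K := by
      apply hc vL (hs hvL) vR (hs hvR)
      rw [grid_between_iff]
      constructor
      · simp only [Nat.dist, hL, hR]; omega
      · simp only [Nat.dist]; omega
    -- q = (vB.1, w.2) is between vB and vT
    have hq : (vB.1, w.2) ∈ K := by
      apply hc vB (hs hvB) vT (hs hvT)
      rw [grid_between_iff]
      constructor
      · simp only [Nat.dist]; omega
      · simp only [Nat.dist, hB, hT]; omega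
    -- w is between p and q
    have := hc _ hp _ hq w ?_
    · exact this
    rw [grid_between_iff]
    constructor
    · simp only [Nat.dist]; omega
    · simp only [Nat.dist]; omega
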